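/- Let G be a connected simple graph on n vertices with diameter exactly 2 and independence number α(G) ≥ 2. Then the distance Laplacian spectral radius satisfies ∂₁^L(G) ≥ n + α(G). -/

import Mathlib

open Finset Matrix Polynomial

/-- The transmission `Tr(v)` of a vertex `v`: the sum of the distances from `v`
to all other vertices of the graph. -/
noncomputable def transm {n : ℕ} (G : SimpleGraph (Fin n)) (v : Fin n) : ℝ :=
  ∑ u : Fin n, (G.dist v u : ℝ)

/-- The distance Laplacian matrix `D^L(G) = Diag(Tr) - D(G)` of a graph `G`. -/
noncomputable def distLap {n : ℕ} (G : SimpleGraph (Fin n)) : Matrix (Fin n) (Fin n) ℝ :=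
  Matrix.diagonal (transm G) - Matrix.of (fun u v : Fin n => (G.dist u v : ℝ))

/-- `IsDLSpec G μ` says that `μ 0 , μ 1 , …, μ (n-1)` are exactly the eigenvalues
(with multiplicity) of the distance Laplacian matrix of `G`; combined with `Antitone μ`
this means `μ ⟨i-1,_⟩ = ∂_i^L(G)` in the usual decreasing ordering. -/
def IsDLSpec {n : ℕ} (G : SimpleGraph (Fin n)) (μ : Fin n → ℝ) : Prop :=
  (distLap G).charpoly = ∏ i : Fin n, (X - C (μ i))

/-- The Wiener index `W(G) = (1/2) ∑_v Tr(v)`. -/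
noncomputable def wiener {n : ℕ} (G : SimpleGraph (Fin n)) : ℝ :=
  (∑ v : Fin n, transm G v) / 2

/-- The maximum transmission `Tr_max(G) = max_v Tr(v)`. -/
noncomputable def trMax {n : ℕ} (G : SimpleGraph (Fin n)) : ℝ :=
  ⨆ v : Fin n, transm G v

/-- The independence number `α(G)`: the maximum size of a set of pairwise
nonadjacent vertices of `G`. -/
noncomputable def indepNum {n : ℕ} (G : SimpleGraph (Fin n)) : ℕ :=
  sSup {k | ∃ s : Finset (Fin n), (∀ u ∈ s, ∀ v ∈ s, ¬ G.Adj u v) ∧ s.card = k}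

/-! Let `u ≠ w` lie in a maximum independent set `S`. Every vertex outside `S` is at
distance at least `1` from `u` and every other vertex of `S` at distance at least `2`, so
`Tr(u), Tr(w) ≥ n + α - 2`, and `d(u, w) ≥ 2`. The quadratic form of `D^L` at `e_u - e_w`
is `Tr(u) + Tr(w) + 2 d(u, w) ≥ 2 (n + α)` while `‖e_u - e_w‖² = 2`, and the quadratic
form of a symmetric matrix is at most its largest eigenvalue times `‖x‖²`. -/

open scoped MatrixOrder in
theorem Matrix.IsHermitian.dotProduct_mulVec_le_of_spectrum_le {ι : Type*} [Fintype ι]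
    [DecidableEq ι] {A : Matrix ι ι ℝ} (hA : A.IsHermitian) {r : ℝ}
    (hr : ∀ t ∈ spectrum ℝ A, t ≤ r) (x : ι → ℝ) :
    x ⬝ᵥ (A *ᵥ x) ≤ r * (x ⬝ᵥ x) := by
  have hle : A ≤ algebraMap ℝ _ r := le_algebraMap_of_spectrum_le hr hA.isSelfAdjoint
  simpa [Algebra.algebraMap_eq_smul_one, sub_mulVec, dotProduct_sub, smul_mulVec] using
    (Matrix.le_iff.mp hle).dotProduct_mulVec_nonneg x

theorem le_of_mem_spectrum_distLap {n : ℕ} {G : SimpleGraph (Fin n)} {μ : Fin n → ℝ}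
    (hμ : IsDLSpec G μ) (hmono : Antitone μ) (hn : 0 < n) {t : ℝ}
    (ht : t ∈ spectrum ℝ (distLap G)) : t ≤ μ ⟨0, hn⟩ := by
  rw [Matrix.mem_spectrum_iff_isRoot_charpoly, hμ, IsRoot, eval_prod,
    Finset.prod_eq_zero_iff] at ht
  obtain ⟨i, -, hi⟩ := ht
  rw [eval_sub, eval_X, eval_C, sub_eq_zero] at hi
  exact hi ▸ hmono (Nat.zero_le i)

theorem distLap_isHermitian {n : ℕ} (G : SimpleGraph (Fin n)) : (distLap G).IsHermitian := by
  ext i j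
  by_cases h : i = j
  · subst h; rfl
  · simp [distLap, diagonal_apply_ne _ h, diagonal_apply_ne _ (Ne.symm h),
      SimpleGraph.dist_comm]

theorem dotProduct_distLap_mulVec_single_sub_single {n : ℕ} (G : SimpleGraph (Fin n))
    {u w : Fin n} (huw : u ≠ w) :
    (Pi.single u 1 - Pi.single w 1 : Fin n → ℝ) ⬝ᵥ
        (distLap G *ᵥ (Pi.single u 1 - Pi.single w 1)) =
      transm G u + transm G w + 2 * G.dist u w := by
  simp [distLap, mulVec_sub, sub_dotProduct, diagonal_apply_ne _ huw,
    diagonal_apply_ne _ huw.symm, SimpleGraph.dist_comm]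
  ring

theorem exists_card_eq_indepNum {n : ℕ} (G : SimpleGraph (Fin n)) :
    ∃ s : Finset (Fin n), (∀ u ∈ s, ∀ v ∈ s, ¬ G.Adj u v) ∧ s.card = indepNum G :=
  Nat.sSup_mem
    (s := {k | ∃ s : Finset (Fin n), (∀ u ∈ s, ∀ v ∈ s, ¬ G.Adj u v) ∧ s.card = k})
    ⟨0, ∅, by simp⟩ ⟨n, by rintro _ ⟨s, -, rfl⟩; simpa using s.card_le_univ⟩

theorem SimpleGraph.Connected.card_add_le_transm_add_two {n : ℕ} {G : SimpleGraph (Fin n)}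
    (hG : G.Connected) {s : Finset (Fin n)} (hs : ∀ u ∈ s, ∀ v ∈ s, ¬ G.Adj u v) {a : Fin n}
    (ha : a ∈ s) : (n : ℝ) + s.card ≤ transm G a + 2 := by
  have key (v : Fin n) :
      1 + (if v ∈ s then 1 else 0) ≤ G.dist a v + (if a = v then 2 else 0) := by
    by_cases hav : a = v
    · subst hav; simp [ha]
    have hpos := hG.pos_dist_of_ne hav
    by_cases hv : v ∈ s
    · have := hG.one_lt_dist_of_ne_of_not_adj hav (hs a ha v hv)
      rw [if_pos hv, if_neg hav]
      omega
    · rw [if_neg hv, if_neg hav]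
      omega
  have hsum := Finset.sum_le_sum fun v (_ : v ∈ Finset.univ) => key v
  simp only [sum_add_distrib, sum_ite_eq, sum_boole, sum_const, card_univ, Fintype.card_fin,
    smul_eq_mul, mul_one, subset_univ, filter_mem_eq_of_subset, mem_univ, ↓reduceIte] at hsum
  simp only [transm]
  exact_mod_cast hsum

theorem distLap_spectral_radius_ge_indepNum (n : ℕ) (G : SimpleGraph (Fin n))
    (hG : G.Connected) (hα : 2 ≤ indepNum G)
    (μ : Fin n → ℝ) (hμ : IsDLSpec G μ) (hmono : Antitone μ) :
    (n : ℝ) + (indepNum G : ℝ) ≤ μ ⟨0, by have h0 : 0 < n := Fin.pos_iff_nonempty.mpr hG.nonempty; omega⟩ := by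
  obtain ⟨s, hs, hcard⟩ := exists_card_eq_indepNum G
  obtain ⟨u, hu, w, hw, huw⟩ := Finset.one_lt_card.mp (show 1 < s.card by omega)
  have hTu := hG.card_add_le_transm_add_two hs hu
  have hTw := hG.card_add_le_transm_add_two hs hw
  have hdist : (2 : ℝ) ≤ G.dist u w := by
    exact_mod_cast hG.one_lt_dist_of_ne_of_not_adj huw (hs u hu w hw)
  have hnorm :
      (Pi.single u 1 - Pi.single w 1 : Fin n → ℝ) ⬝ᵥ (Pi.single u 1 - Pi.single w 1) = 2 := by
    simp [huw, huw.symm, one_add_one_eq_two]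
  have hrayleigh := (distLap_isHermitian G).dotProduct_mulVec_le_of_spectrum_le
    (fun _ => le_of_mem_spectrum_distLap hμ hmono (Fin.pos_iff_nonempty.mpr hG.nonempty))
    (Pi.single u 1 - Pi.single w 1)
  rw [dotProduct_distLap_mulVec_single_sub_single G huw, hnorm] at hrayleigh
  rw [← hcard]
  linarith
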